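/- There exists a constant C such that for all k₁, k₂, k₃, j₁, j₂, j₃ ∈ ℕ and all nonnegative f₁, f₂, f₃ ∈ L²(ℤ² × ℝ) with supp(f_i) ⊆ D_{k_i, ≤ j_i} for i = 1, 2, 3: ∫_{ℤ² × ℝ} (f₁ * f₂) f₃ ≤ C 2^{k_min} 2^{j_min/2} ∏_{i=1}^{3} ‖f_i‖_{L²}, where k_min = min(k₁, k₂, k₃) and j_min = min(j₁, j₂, j₃). -/

import Mathlib

open MeasureTheory
open scoped ENNReal

/-- Counting measure on `ℤ²` times Lebesgue measure on `ℝ`. -/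
noncomputable def muZ : Measure ((ℤ × ℤ) × ℝ) :=
  (Measure.count : Measure (ℤ × ℤ)).prod (volume : Measure ℝ)

/-- Convolution on `ℤ² × ℝ` of nonnegative functions, valued in `ℝ≥0∞`:
`(f * g)(ζ, τ) = ∑_{ζ'} ∫ f(ζ', τ') g(ζ - ζ', τ - τ') dτ'`. -/
noncomputable def convZ (f g : (ℤ × ℤ) × ℝ → ℝ) (p : (ℤ × ℤ) × ℝ) : ℝ≥0∞ :=
  ∑' ζ : ℤ × ℤ, ∫⁻ τ : ℝ,
    ENNReal.ofReal (f (ζ, τ)) * ENNReal.ofReal (g (p.1 - ζ, p.2 - τ))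

/-- The Zakharov-Kuznetsov dispersion relation `ω(ξ,η) = ξ³ + ξη²` on `ℤ²`. -/
def omegaZK (ζ : ℤ × ℤ) : ℝ := ((ζ.1 : ℝ)) ^ 3 + (ζ.1 : ℝ) * ((ζ.2 : ℝ)) ^ 2

/-- The isotropic frequency-modulation region
`D_{k,≤j} = {(ξ,η,τ) : 2^{k-1} ≤ |(ξ,η)| < 2^k, |τ - ω(ξ,η)| ≤ 2^j}`,
with `|(ξ,η)|` the Euclidean norm. -/
noncomputable def DZ (k j : ℕ) : Set ((ℤ × ℤ) × ℝ) :=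
  {p | (2:ℝ) ^ ((k : ℤ) - 1) ≤ Real.sqrt (((p.1.1 : ℝ)) ^ 2 + ((p.1.2 : ℝ)) ^ 2) ∧
    Real.sqrt (((p.1.1 : ℝ)) ^ 2 + ((p.1.2 : ℝ)) ^ 2) < (2:ℝ) ^ (k : ℤ) ∧
    |p.2 - omegaZK p.1| ≤ (2:ℝ) ^ (j : ℤ)}

/-!
On an abelian group with an invariant measure, `∫ (f ⋆ g) h ≤ μ(S)^{1/2} ‖f‖₂ ‖g‖₂ ‖h‖₂` as soon
as one of `f, g, h` vanishes outside `S`: Cauchy–Schwarz bounds the integral of the other two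
against each other (after Fubini; `‖·‖₂` is translation invariant), and once more bounds the
integral of the remaining one by `μ(S)^{1/2}` times its norm.

On `ℤ² × ℝ` this is applied twice. First in `τ`, for each pair of frequencies: the fiber
`fᵢ(ζ, ·)` vanishes off an interval of length `2·2^{jᵢ}` around `ω(ζ)`, which leaves the factor
`2^{j_min/2}` times the same trilinear form on `ℤ²`, now for the fiber norms `ζ ↦ ‖fᵢ(ζ, ·)‖₂`.
These vanish outside the disc of radius `2^{kᵢ}`, which has at most `(3·2^{kᵢ})²` lattice points.
By Tonelli the `ℓ²` norm of the fiber norms is the `L²` norm of `fᵢ`.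
-/

theorem Monotone.min_le_map_min₃ {α β : Type*} [LinearOrder α] [LinearOrder β] {φ : α → β}
    (hφ : Monotone φ) {a b c : β} {i j k : α} (ha : a ≤ φ i) (hb : b ≤ φ j) (hc : c ≤ φ k) :
    min a (min b c) ≤ φ (min i (min j k)) := by
  rw [hφ.map_min, hφ.map_min]
  exact min_le_min ha (min_le_min hb hc)

section Holder
variable {α : Type*} [MeasurableSpace α] {μ : Measure α}

theorem lintegral_mul_le_eLpNorm_two_mul {f g : α → ℝ≥0∞} (hf : AEMeasurable f μ)
    (hg : AEMeasurable g μ) : ∫⁻ x, f x * g x ∂μ ≤ eLpNorm f 2 μ * eLpNorm g 2 μ := by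
  simpa [eLpNorm_eq_lintegral_rpow_enorm_toReal] using
    ENNReal.lintegral_mul_le_Lp_mul_Lq μ Real.HolderConjugate.two_two hf hg

theorem lintegral_le_measure_rpow_mul_eLpNorm {f : α → ℝ≥0∞} (hf : AEMeasurable f μ)
    {s : Set α} (hs : MeasurableSet s) (hfs : ∀ x ∉ s, f x = 0) :
    ∫⁻ x, f x ∂μ ≤ μ s ^ (1 / 2 : ℝ) * eLpNorm f 2 μ := by
  have hf_eq : f = fun x => s.indicator (fun _ => (1 : ℝ≥0∞)) x * f x := by
    ext x; by_cases hx : x ∈ s <;> simp [hx, hfs]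
  calc ∫⁻ x, f x ∂μ = ∫⁻ x, s.indicator (fun _ => (1 : ℝ≥0∞)) x * f x ∂μ := by
        conv_lhs => rw [hf_eq]
    _ ≤ eLpNorm (s.indicator fun _ => (1 : ℝ≥0∞)) 2 μ * eLpNorm f 2 μ :=
        lintegral_mul_le_eLpNorm_two_mul (aemeasurable_const.indicator hs) hf
    _ = μ s ^ (1 / 2 : ℝ) * eLpNorm f 2 μ := by
        rw [eLpNorm_indicator_const hs (by norm_num) (by norm_num)]; simp

theorem lintegral_comp_mul_le_eLpNorm_two_mul {β : Type*} [MeasurableSpace β] {ν : Measure β}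
    {φ : α → β} (hφ : MeasurePreserving φ μ ν) {f : β → ℝ≥0∞} {g : α → ℝ≥0∞}
    (hf : AEMeasurable f ν) (hg : AEMeasurable g μ) :
    ∫⁻ x, f (φ x) * g x ∂μ ≤ eLpNorm f 2 ν * eLpNorm g 2 μ := by
  have := lintegral_mul_le_eLpNorm_two_mul
    (hf.comp_quasiMeasurePreserving hφ.quasiMeasurePreserving) hg
  rwa [eLpNorm_comp_measurePreserving hf.aestronglyMeasurable hφ] at this

end Holder

theorem eLpNorm_eLpNorm_prodMk_eq {α β : Type*} [MeasurableSpace α] [MeasurableSpace β]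
    {μ : Measure α} {ν : Measure β} [SFinite ν] {p : ℝ≥0∞} (hp₀ : p ≠ 0) (hp : p ≠ ∞)
    {F : α × β → ℝ≥0∞} (hF : AEMeasurable F (μ.prod ν)) :
    eLpNorm (fun a => eLpNorm (fun b => F (a, b)) p ν) p μ = eLpNorm F p (μ.prod ν) := by
  have hp' : p.toReal ≠ 0 := ENNReal.toReal_ne_zero.mpr ⟨hp₀, hp⟩
  simp only [eLpNorm_eq_lintegral_rpow_enorm_toReal hp₀ hp, enorm_eq_self, one_div,
    ENNReal.rpow_inv_rpow hp']
  rw [lintegral_prod _ (hF.pow_const _)]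

section Convolution
variable {G : Type*} [AddCommGroup G] [MeasurableSpace G] [MeasurableAdd₂ G] [MeasurableNeg G]
  {μ : Measure G} [μ.IsAddLeftInvariant] {f g h : G → ℝ≥0∞} {s : Set G}

theorem lintegral_lconvolution_mul_eq [SFinite μ] (hf : AEMeasurable f μ)
    (hg : AEMeasurable g μ) (hh : AEMeasurable h μ) :
    ∫⁻ x, (f ⋆ₗ[μ] g) x * h x ∂μ = ∫⁻ y, f y * ∫⁻ x, g (-y + x) * h x ∂μ ∂μ := by
  simp only [lconvolution_def]
  conv_lhs => enter [2, x]; rw [← lintegral_mul_const'' _ (by fun_prop)]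
  rw [lintegral_lintegral_swap (by fun_prop)]
  congr! 2 with y
  rw [← lintegral_const_mul'' _ (by fun_prop)]
  simp [mul_assoc]

theorem lintegral_lconvolution_mul_le_of_left [SFinite μ] (hf : AEMeasurable f μ)
    (hg : AEMeasurable g μ) (hh : AEMeasurable h μ) (hs : MeasurableSet s) (hfs : ∀ x ∉ s, f x = 0) :
    ∫⁻ x, (f ⋆ₗ[μ] g) x * h x ∂μ ≤
      μ s ^ (1 / 2 : ℝ) * (eLpNorm f 2 μ * eLpNorm g 2 μ * eLpNorm h 2 μ) :=
  calc ∫⁻ x, (f ⋆ₗ[μ] g) x * h x ∂μ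
      = ∫⁻ y, f y * ∫⁻ x, g (-y + x) * h x ∂μ ∂μ := lintegral_lconvolution_mul_eq hf hg hh
    _ ≤ ∫⁻ y, f y * (eLpNorm g 2 μ * eLpNorm h 2 μ) ∂μ := by
        gcongr with y
        exact lintegral_comp_mul_le_eLpNorm_two_mul (measurePreserving_add_left μ (-y)) hg hh
    _ = (∫⁻ y, f y ∂μ) * (eLpNorm g 2 μ * eLpNorm h 2 μ) := lintegral_mul_const'' _ hf
    _ ≤ (μ s ^ (1 / 2 : ℝ) * eLpNorm f 2 μ) * (eLpNorm g 2 μ * eLpNorm h 2 μ) := by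
        gcongr; exact lintegral_le_measure_rpow_mul_eLpNorm hf hs hfs
    _ = _ := by ring

variable [μ.IsNegInvariant]

theorem lconvolution_le_eLpNorm_two_mul (hf : AEMeasurable f μ) (hg : AEMeasurable g μ)
    (x : G) : (f ⋆ₗ[μ] g) x ≤ eLpNorm f 2 μ * eLpNorm g 2 μ := by
  simp_rw [lconvolution_def, neg_add_eq_sub, mul_comm (f _)]
  exact (lintegral_comp_mul_le_eLpNorm_two_mul (Measure.measurePreserving_sub_left μ x) hg
    hf).trans_eq (mul_comm _ _)

theorem lintegral_lconvolution_mul_le_of_right (hf : AEMeasurable f μ) (hg : AEMeasurable g μ)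
    (hh : AEMeasurable h μ) (hs : MeasurableSet s) (hhs : ∀ x ∉ s, h x = 0) :
    ∫⁻ x, (f ⋆ₗ[μ] g) x * h x ∂μ ≤
      μ s ^ (1 / 2 : ℝ) * (eLpNorm f 2 μ * eLpNorm g 2 μ * eLpNorm h 2 μ) :=
  calc ∫⁻ x, (f ⋆ₗ[μ] g) x * h x ∂μ
      ≤ ∫⁻ x, eLpNorm f 2 μ * eLpNorm g 2 μ * h x ∂μ := by
        gcongr with x; exact lconvolution_le_eLpNorm_two_mul hf hg x
    _ = eLpNorm f 2 μ * eLpNorm g 2 μ * ∫⁻ x, h x ∂μ := lintegral_const_mul'' _ hh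
    _ ≤ eLpNorm f 2 μ * eLpNorm g 2 μ * (μ s ^ (1 / 2 : ℝ) * eLpNorm h 2 μ) := by
        gcongr; exact lintegral_le_measure_rpow_mul_eLpNorm hh hs hhs
    _ = _ := by ring

variable [SFinite μ]

theorem lintegral_lconvolution_mul_le_of_middle (hf : AEMeasurable f μ) (hg : AEMeasurable g μ)
    (hh : AEMeasurable h μ) (hs : MeasurableSet s) (hgs : ∀ x ∉ s, g x = 0) :
    ∫⁻ x, (f ⋆ₗ[μ] g) x * h x ∂μ ≤
      μ s ^ (1 / 2 : ℝ) * (eLpNorm f 2 μ * eLpNorm g 2 μ * eLpNorm h 2 μ) := by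
  rw [lconvolution_comm, mul_comm (eLpNorm f 2 μ)]
  exact lintegral_lconvolution_mul_le_of_left hg hf hh hs hgs

theorem lintegral_lconvolution_mul_le_min {s₁ s₂ s₃ : Set G} (hf : AEMeasurable f μ)
    (hg : AEMeasurable g μ) (hh : AEMeasurable h μ) (hs₁ : MeasurableSet s₁)
    (hs₂ : MeasurableSet s₂) (hs₃ : MeasurableSet s₃) (hfs : ∀ x ∉ s₁, f x = 0)
    (hgs : ∀ x ∉ s₂, g x = 0) (hhs : ∀ x ∉ s₃, h x = 0) :
    ∫⁻ x, (f ⋆ₗ[μ] g) x * h x ∂μ ≤ min (μ s₁) (min (μ s₂) (μ s₃)) ^ (1 / 2 : ℝ) *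
      (eLpNorm f 2 μ * eLpNorm g 2 μ * eLpNorm h 2 μ) := by
  rcases min_choice (μ s₂) (μ s₃) with h₂₃ | h₂₃ <;> rw [h₂₃] <;>
    rcases min_choice (μ s₁) _ with h₁ | h₁ <;> rw [h₁]
  · exact lintegral_lconvolution_mul_le_of_left hf hg hh hs₁ hfs
  · exact lintegral_lconvolution_mul_le_of_middle hf hg hh hs₂ hgs
  · exact lintegral_lconvolution_mul_le_of_left hf hg hh hs₁ hfs
  · exact lintegral_lconvolution_mul_le_of_right hf hg hh hs₃ hhs

end Convolution

theorem lintegral_lconvolution_mul_count {H : Type*} [AddCommGroup H] [MeasurableSpace H]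
    [MeasurableSingletonClass H] (f g h : H → ℝ≥0∞) :
    ∫⁻ x, (f ⋆ₗ[Measure.count] g) x * h x ∂Measure.count =
      ∑' x, ∑' y, f y * g (x - y) * h x := by
  simp [lintegral_count, lconvolution_def, neg_add_eq_sub, ENNReal.tsum_mul_right]

def discZ (r : ℝ) : Set (ℤ × ℤ) := {ζ | √((ζ.1 : ℝ) ^ 2 + (ζ.2 : ℝ) ^ 2) < r}

theorem count_discZ_natCast_le (n : ℕ) :
    Measure.count (discZ n) ≤ ((2 * n + 1) ^ 2 : ℕ) := by
  have hsub : discZ n ⊆ ↑(Finset.Icc (-n : ℤ) n ×ˢ Finset.Icc (-n : ℤ) n) := by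
    intro ζ hζ
    have h₁ : |(ζ.1 : ℝ)| < n := (Real.abs_le_sqrt (by nlinarith)).trans_lt hζ
    have h₂ : |(ζ.2 : ℝ)| < n := (Real.abs_le_sqrt (by nlinarith)).trans_lt hζ
    rw [← Int.cast_abs] at h₁ h₂
    have h₁' : |ζ.1| < n := by exact_mod_cast h₁
    have h₂' : |ζ.2| < n := by exact_mod_cast h₂
    simp only [Finset.coe_product, Set.mem_prod, Finset.coe_Icc, Set.mem_Icc]
    constructor <;> constructor <;> linarith [abs_lt.mp h₁', abs_lt.mp h₂']
  calc Measure.count (discZ n) ≤ Measure.count _ := measure_mono hsub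
    _ = ((2 * n + 1) ^ 2 : ℕ) := by
      rw [Measure.count_apply_finset, Finset.card_product, Int.card_Icc,
        show (n : ℤ) + 1 - -n = ((2 * n + 1 : ℕ) : ℤ) by push_cast; ring, Int.toNat_natCast, sq]

theorem count_discZ_two_pow_le (k : ℕ) :
    Measure.count (discZ (2 ^ k)) ≤ ENNReal.ofReal ((3 * 2 ^ k) ^ 2) := by
  have h := count_discZ_natCast_le (2 ^ k)
  rw [← ENNReal.ofReal_natCast] at h
  push_cast at h
  refine h.trans (ENNReal.ofReal_le_ofReal ?_)
  have : (1:ℝ) ≤ 2 ^ k := one_le_pow₀ (by norm_num)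
  gcongr
  linarith

noncomputable def fiber (f : (ℤ × ℤ) × ℝ → ℝ) (ζ : ℤ × ℤ) (τ : ℝ) : ℝ≥0∞ :=
  ENNReal.ofReal (f (ζ, τ))

noncomputable def fiberNorm (f : (ℤ × ℤ) × ℝ → ℝ) (ζ : ℤ × ℤ) : ℝ≥0∞ :=
  eLpNorm (fiber f ζ) 2 volume

section Fiber
variable {f f₁ f₂ f₃ : (ℤ × ℤ) × ℝ → ℝ}

theorem aemeasurable_fiber (hf : AEStronglyMeasurable f muZ) (ζ : ℤ × ℤ) :
    AEMeasurable (fiber f ζ) volume :=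
  (Measure.ae_count_iff.mp hf.prodMk_left ζ).aemeasurable.ennreal_ofReal

theorem convZ_eq_tsum_lconvolution (f g : (ℤ × ℤ) × ℝ → ℝ) (p : (ℤ × ℤ) × ℝ) :
    convZ f g p = ∑' ζ, (fiber f ζ ⋆ₗ fiber g (p.1 - ζ)) p.2 := by
  simp [convZ, lconvolution_def, fiber, neg_add_eq_sub]

theorem lintegral_convZ_mul_le_tsum (hf₁ : AEStronglyMeasurable f₁ muZ)
    (hf₂ : AEStronglyMeasurable f₂ muZ) (hf₃ : AEStronglyMeasurable f₃ muZ) :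
    ∫⁻ p, convZ f₁ f₂ p * ENNReal.ofReal (f₃ p) ∂muZ ≤
      ∑' ζ, ∑' ζ', ∫⁻ τ, (fiber f₁ ζ' ⋆ₗ fiber f₂ (ζ - ζ')) τ * fiber f₃ ζ τ :=
  calc ∫⁻ p, convZ f₁ f₂ p * ENNReal.ofReal (f₃ p) ∂muZ
      -- an inequality, so that the measurability of `convZ f₁ f₂` is never needed
      ≤ ∫⁻ ζ, ∫⁻ τ, convZ f₁ f₂ (ζ, τ) * fiber f₃ ζ τ ∂volume ∂Measure.count :=
        lintegral_prod_le _
    _ = ∑' ζ, ∫⁻ τ, ∑' ζ', (fiber f₁ ζ' ⋆ₗ fiber f₂ (ζ - ζ')) τ * fiber f₃ ζ τ := by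
        simp_rw [lintegral_count, convZ_eq_tsum_lconvolution, ENNReal.tsum_mul_right]
    _ = _ := by
        refine tsum_congr fun ζ => ?_
        exact lintegral_tsum fun ζ' => (aemeasurable_lconvolution (aemeasurable_fiber hf₁ ζ')
          (aemeasurable_fiber hf₂ (ζ - ζ'))).mul (aemeasurable_fiber hf₃ ζ)

theorem mem_DZ_of_fiber_ne_zero {k j : ℕ} (hf : Function.support f ⊆ DZ k j) {ζ : ℤ × ℤ}
    {τ : ℝ} (h : fiber f ζ τ ≠ 0) : (ζ, τ) ∈ DZ k j :=
  hf fun h0 => h (by simp [fiber, h0])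

theorem fiber_eq_zero_of_notMem_Icc {k j : ℕ} (hf : Function.support f ⊆ DZ k j) {ζ : ℤ × ℤ}
    {τ : ℝ} (hτ : τ ∉ Set.Icc (omegaZK ζ - 2 ^ j) (omegaZK ζ + 2 ^ j)) : fiber f ζ τ = 0 := by
  by_contra h
  have := abs_le.mp (mem_DZ_of_fiber_ne_zero hf h).2.2
  simp only [zpow_natCast] at this
  exact hτ ⟨by linarith, by linarith⟩

theorem fiberNorm_eq_zero_of_notMem_discZ {k j : ℕ} (hf : Function.support f ⊆ DZ k j)
    {ζ : ℤ × ℤ} (hζ : ζ ∉ discZ (2 ^ k)) : fiberNorm f ζ = 0 := by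
  have h : fiber f ζ = 0 := by
    ext τ
    by_contra h
    exact hζ (by simpa [discZ] using (mem_DZ_of_fiber_ne_zero hf h).2.1)
  simp [fiberNorm, h]

theorem lintegral_lconvolution_fiber_mul_le {k₁ k₂ k₃ j₁ j₂ j₃ : ℕ}
    (hf₁ : AEStronglyMeasurable f₁ muZ) (hf₂ : AEStronglyMeasurable f₂ muZ)
    (hf₃ : AEStronglyMeasurable f₃ muZ) (hs₁ : Function.support f₁ ⊆ DZ k₁ j₁)
    (hs₂ : Function.support f₂ ⊆ DZ k₂ j₂) (hs₃ : Function.support f₃ ⊆ DZ k₃ j₃)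
    (ζ ζ' : ℤ × ℤ) :
    ∫⁻ τ, (fiber f₁ ζ' ⋆ₗ fiber f₂ (ζ - ζ')) τ * fiber f₃ ζ τ ≤
      ENNReal.ofReal (2 * 2 ^ min j₁ (min j₂ j₃)) ^ (1 / 2 : ℝ) *
        (fiberNorm f₁ ζ' * fiberNorm f₂ (ζ - ζ') * fiberNorm f₃ ζ) := by
  refine (lintegral_lconvolution_mul_le_min (aemeasurable_fiber hf₁ _)
    (aemeasurable_fiber hf₂ _) (aemeasurable_fiber hf₃ _) measurableSet_Icc measurableSet_Icc
    measurableSet_Icc (fun _ => fiber_eq_zero_of_notMem_Icc hs₁)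
    (fun _ => fiber_eq_zero_of_notMem_Icc hs₂) (fun _ => fiber_eq_zero_of_notMem_Icc hs₃)).trans ?_
  have hvol (c r : ℝ) : volume (Set.Icc (c - r) (c + r)) = ENNReal.ofReal (2 * r) := by
    rw [Real.volume_Icc]; ring_nf
  have hmono : Monotone fun j : ℕ => ENNReal.ofReal (2 * 2 ^ j) := fun i j hij =>
    ENNReal.ofReal_le_ofReal (by gcongr; norm_num)
  gcongr ?_ ^ _ * _
  simp only [hvol]
  exact hmono.min_le_map_min₃ le_rfl le_rfl le_rfl

theorem lintegral_lconvolution_fiberNorm_mul_le {k₁ k₂ k₃ j₁ j₂ j₃ : ℕ}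
    (hs₁ : Function.support f₁ ⊆ DZ k₁ j₁) (hs₂ : Function.support f₂ ⊆ DZ k₂ j₂)
    (hs₃ : Function.support f₃ ⊆ DZ k₃ j₃) :
    ∫⁻ ζ, (fiberNorm f₁ ⋆ₗ[Measure.count] fiberNorm f₂) ζ * fiberNorm f₃ ζ ∂Measure.count ≤
      ENNReal.ofReal ((3 * 2 ^ min k₁ (min k₂ k₃)) ^ 2) ^ (1 / 2 : ℝ) *
        (eLpNorm (fiberNorm f₁) 2 Measure.count * eLpNorm (fiberNorm f₂) 2 Measure.count *
          eLpNorm (fiberNorm f₃) 2 Measure.count) := by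
  refine (lintegral_lconvolution_mul_le_min Measurable.of_discrete.aemeasurable
    Measurable.of_discrete.aemeasurable Measurable.of_discrete.aemeasurable
    (.of_discrete (s := discZ (2 ^ k₁))) (.of_discrete (s := discZ (2 ^ k₂)))
    (.of_discrete (s := discZ (2 ^ k₃))) (fun _ => fiberNorm_eq_zero_of_notMem_discZ hs₁)
    (fun _ => fiberNorm_eq_zero_of_notMem_discZ hs₂)
    (fun _ => fiberNorm_eq_zero_of_notMem_discZ hs₃)).trans ?_
  have hmono : Monotone fun k : ℕ => ENNReal.ofReal ((3 * 2 ^ k) ^ 2) := fun i j hij =>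
    ENNReal.ofReal_le_ofReal (by gcongr; norm_num)
  gcongr ?_ ^ _ * _
  exact hmono.min_le_map_min₃ (count_discZ_two_pow_le _) (count_discZ_two_pow_le _)
    (count_discZ_two_pow_le _)

theorem eLpNorm_fiberNorm (hf : AEStronglyMeasurable f muZ) (hf₀ : ∀ p, 0 ≤ f p) :
    eLpNorm (fiberNorm f) 2 Measure.count = eLpNorm f 2 muZ := by
  change eLpNorm (fun ζ => eLpNorm (fun τ => ENNReal.ofReal (f (ζ, τ))) 2 volume) 2 _ = _
  rw [eLpNorm_eLpNorm_prodMk_eq two_ne_zero ENNReal.ofNat_ne_top hf.aemeasurable.ennreal_ofReal,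
    ← eLpNorm_enorm f]
  simp_rw [Real.enorm_eq_ofReal (hf₀ _)]
  rfl

theorem lintegral_convZ_mul_le {k₁ k₂ k₃ j₁ j₂ j₃ : ℕ}
    (hf₁ : AEStronglyMeasurable f₁ muZ) (hf₂ : AEStronglyMeasurable f₂ muZ)
    (hf₃ : AEStronglyMeasurable f₃ muZ) (hs₁ : Function.support f₁ ⊆ DZ k₁ j₁)
    (hs₂ : Function.support f₂ ⊆ DZ k₂ j₂) (hs₃ : Function.support f₃ ⊆ DZ k₃ j₃) :
    ∫⁻ p, convZ f₁ f₂ p * ENNReal.ofReal (f₃ p) ∂muZ ≤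
      ENNReal.ofReal (2 * 2 ^ min j₁ (min j₂ j₃)) ^ (1 / 2 : ℝ) *
        ∫⁻ ζ, (fiberNorm f₁ ⋆ₗ[Measure.count] fiberNorm f₂) ζ * fiberNorm f₃ ζ ∂Measure.count :=
  calc ∫⁻ p, convZ f₁ f₂ p * ENNReal.ofReal (f₃ p) ∂muZ
      ≤ ∑' ζ, ∑' ζ', ∫⁻ τ, (fiber f₁ ζ' ⋆ₗ fiber f₂ (ζ - ζ')) τ * fiber f₃ ζ τ :=
        lintegral_convZ_mul_le_tsum hf₁ hf₂ hf₃
    _ ≤ ∑' ζ, ∑' ζ', ENNReal.ofReal (2 * 2 ^ min j₁ (min j₂ j₃)) ^ (1 / 2 : ℝ) *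
          (fiberNorm f₁ ζ' * fiberNorm f₂ (ζ - ζ') * fiberNorm f₃ ζ) := by
        gcongr with ζ ζ'
        exact lintegral_lconvolution_fiber_mul_le hf₁ hf₂ hf₃ hs₁ hs₂ hs₃ ζ ζ'
    _ = _ := by simp_rw [ENNReal.tsum_mul_left, lintegral_lconvolution_mul_count]

end Fiber

theorem ofReal_rpow_half_mul_ofReal_rpow_half (j k : ℕ) :
    ENNReal.ofReal (2 * 2 ^ j) ^ (1 / 2 : ℝ) * ENNReal.ofReal ((3 * 2 ^ k) ^ 2) ^ (1 / 2 : ℝ) =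
      ENNReal.ofReal (3 * √2 * 2 ^ k * 2 ^ ((j : ℝ) / 2)) := by
  rw [ENNReal.ofReal_rpow_of_nonneg (by positivity) (by norm_num),
    ENNReal.ofReal_rpow_of_nonneg (by positivity) (by norm_num),
    ← ENNReal.ofReal_mul (by positivity)]
  have hj : √((2 : ℝ) ^ j) = 2 ^ ((j : ℝ) / 2) := by
    rw [Real.sqrt_eq_rpow, ← Real.rpow_natCast, ← Real.rpow_mul (by norm_num)]
    ring_nf
  rw [← Real.sqrt_eq_rpow, ← Real.sqrt_eq_rpow, Real.sqrt_sq (by positivity),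
    Real.sqrt_mul (by norm_num), hj]
  ring_nf

/-- Cauchy-Schwarz bilinear convolution estimate for modulation-localized
functions: `∫ (f₁ * f₂) f₃ ≲ 2^{k_min} 2^{j_min/2} ∏ᵢ ‖fᵢ‖_{L²}`, where
`k_min = min(k₁,k₂,k₃)` and `j_min = min(j₁,j₂,j₃)`. -/
theorem cauchy_schwarz_bilinear_estimate :
    ∃ C > 0, ∀ (k₁ k₂ k₃ j₁ j₂ j₃ : ℕ) (f₁ f₂ f₃ : (ℤ × ℤ) × ℝ → ℝ),
      (∀ p, 0 ≤ f₁ p) → (∀ p, 0 ≤ f₂ p) → (∀ p, 0 ≤ f₃ p) →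
      MemLp f₁ 2 muZ → MemLp f₂ 2 muZ → MemLp f₃ 2 muZ →
      Function.support f₁ ⊆ DZ k₁ j₁ →
      Function.support f₂ ⊆ DZ k₂ j₂ →
      Function.support f₃ ⊆ DZ k₃ j₃ →
      ∫⁻ p, convZ f₁ f₂ p * ENNReal.ofReal (f₃ p) ∂muZ ≤
        ENNReal.ofReal (C * (2:ℝ) ^ (min k₁ (min k₂ k₃)) *
            (2:ℝ) ^ (((min j₁ (min j₂ j₃) : ℕ) : ℝ)/2)) *
          (eLpNorm f₁ 2 muZ * eLpNorm f₂ 2 muZ * eLpNorm f₃ 2 muZ) := by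
  refine ⟨3 * √2, by positivity, ?_⟩
  intro k₁ k₂ k₃ j₁ j₂ j₃ f₁ f₂ f₃ h₁ h₂ h₃ hf₁ hf₂ hf₃ hs₁ hs₂ hs₃
  have hm₁ := hf₁.aestronglyMeasurable
  have hm₂ := hf₂.aestronglyMeasurable
  have hm₃ := hf₃.aestronglyMeasurable
  calc ∫⁻ p, convZ f₁ f₂ p * ENNReal.ofReal (f₃ p) ∂muZ
      ≤ ENNReal.ofReal (2 * 2 ^ min j₁ (min j₂ j₃)) ^ (1 / 2 : ℝ) *
          ∫⁻ ζ, (fiberNorm f₁ ⋆ₗ[Measure.count] fiberNorm f₂) ζ * fiberNorm f₃ ζ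
            ∂Measure.count :=
        lintegral_convZ_mul_le hm₁ hm₂ hm₃ hs₁ hs₂ hs₃
    _ ≤ ENNReal.ofReal (2 * 2 ^ min j₁ (min j₂ j₃)) ^ (1 / 2 : ℝ) *
          (ENNReal.ofReal ((3 * 2 ^ min k₁ (min k₂ k₃)) ^ 2) ^ (1 / 2 : ℝ) *
            (eLpNorm (fiberNorm f₁) 2 Measure.count * eLpNorm (fiberNorm f₂) 2 Measure.count *
              eLpNorm (fiberNorm f₃) 2 Measure.count)) := by
        gcongr
        exact lintegral_lconvolution_fiberNorm_mul_le hs₁ hs₂ hs₃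
    _ = _ := by
        rw [eLpNorm_fiberNorm hm₁ h₁, eLpNorm_fiberNorm hm₂ h₂, eLpNorm_fiberNorm hm₃ h₃,
          ← mul_assoc, ofReal_rpow_half_mul_ofReal_rpow_half]
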